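/- arXiv:2012.12759 — 4 statements merged into one kernel-verified Lean document; each statement's English description precedes it below -/
import Mathlib

section
/- Let L, R, D be nonnegative reals with L + R + D > 0, and let s be a complex number with Re s > 0. Then L s² + R s + D ≠ 0 and the admittance ρ = s / (L s² + R s + D) satisfies Re ρ > 0. -/
open Complex

/-!
The admittance is the reciprocal of the impedance `Z(s) = L s + R + D / s`. On the right
half-plane both `s` and `1 / s` have positive real part, so `Re Z(s) > 0` as a nonnegative,
not identically zero combination of positive numbers. Hence `Z(s) ≠ 0`, and the reciprocal of a
number with positive real part again has positive real part.
-/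

theorem Complex.re_inv_pos {z : ℂ} (hz : 0 < z.re) : 0 < z⁻¹.re := by
  rw [inv_re]
  exact div_pos hz (normSq_pos.mpr (ne_zero_of_re_pos hz))

noncomputable def impedance (L R D : ℝ) (s : ℂ) : ℂ := L * s + R + D * s⁻¹

section Impedance

variable {L R D : ℝ} {s : ℂ}

theorem impedance_re_pos (hL : 0 ≤ L) (hR : 0 ≤ R) (hD : 0 ≤ D) (hsum : 0 < L + R + D)
    (hs : 0 < s.re) : 0 < (impedance L R D s).re := by
  have hs' : 0 < s⁻¹.re := re_inv_pos hs
  have hre : (impedance L R D s).re = L * s.re + R + D * s⁻¹.re := by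
    simp [impedance]
  rw [hre]
  set m := min s.re (min 1 s⁻¹.re)
  have hm : 0 < m := lt_min hs (lt_min one_pos hs')
  calc 0 < (L + R + D) * m := mul_pos hsum hm
    _ ≤ L * s.re + R + D * s⁻¹.re := by
      have h1 : m ≤ s.re := min_le_left _ _
      have h2 : m ≤ 1 := (min_le_right _ _).trans (min_le_left _ _)
      have h3 : m ≤ s⁻¹.re := (min_le_right _ _).trans (min_le_right _ _)
      nlinarith [mul_le_mul_of_nonneg_left h1 hL, mul_le_mul_of_nonneg_left h2 hR,
        mul_le_mul_of_nonneg_left h3 hD]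

theorem mul_impedance (hs : s ≠ 0) :
    s * impedance L R D s = (L : ℂ) * s ^ 2 + (R : ℂ) * s + (D : ℂ) := by
  simp only [impedance]
  field_simp

end Impedance

theorem admittance_well_defined_re_pos (L R D : ℝ) (hL : 0 ≤ L) (hR : 0 ≤ R) (hD : 0 ≤ D)
    (hsum : 0 < L + R + D) (s : ℂ) (hs : 0 < s.re) :
    (L : ℂ) * s ^ 2 + (R : ℂ) * s + (D : ℂ) ≠ 0 ∧
      0 < (s / ((L : ℂ) * s ^ 2 + (R : ℂ) * s + (D : ℂ))).re := by
  have hs0 : s ≠ 0 := ne_zero_of_re_pos hs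
  have hZ : 0 < (impedance L R D s).re := impedance_re_pos hL hR hD hsum hs
  rw [← mul_impedance hs0, div_mul_cancel_left₀ hs0]
  exact ⟨mul_ne_zero hs0 (ne_zero_of_re_pos hZ), re_inv_pos hZ⟩
end

section
/- Let L, R, D be nonnegative reals with L + R + D > 0, and let s be a complex number with Re s > 0. Then the admittance ρ = s / (L s² + R s + D) satisfies |ρ| ≤ (|s| / Re s) · Re ρ. -/
/-!
For `s ≠ 0`, the set of `w` with `Re s · ‖w‖ ≤ ‖s‖ · Re w` is the closed sector
`|arg w| ≤ |arg s|`. When `Re s ≥ 0` it is a convex cone containing `s` and the nonnegative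
reals, and it is closed under inversion. Since `ρ⁻¹ = L s + R + D s⁻¹`, the inverse admittance
lies in this sector, hence so does `ρ`, and membership of `ρ` is the claimed estimate.
-/

open Complex

namespace Complex

def sector (s : ℂ) : Set ℂ := {w | s.re * ‖w‖ ≤ ‖s‖ * w.re}

variable {s w z : ℂ}

theorem mem_sector : w ∈ sector s ↔ s.re * ‖w‖ ≤ ‖s‖ * w.re := Iff.rfl

theorem self_mem_sector : s ∈ sector s := by
  rw [mem_sector, mul_comm]

theorem ofReal_mem_sector {r : ℝ} (hr : 0 ≤ r) : (r : ℂ) ∈ sector s := by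
  rw [mem_sector, norm_real, Real.norm_of_nonneg hr, ofReal_re]
  exact mul_le_mul_of_nonneg_right (re_le_norm s) hr

theorem add_mem_sector (hs : 0 ≤ s.re) (hw : w ∈ sector s) (hz : z ∈ sector s) :
    w + z ∈ sector s := by
  rw [mem_sector] at *
  calc s.re * ‖w + z‖ ≤ s.re * (‖w‖ + ‖z‖) := mul_le_mul_of_nonneg_left (norm_add_le w z) hs
    _ ≤ ‖s‖ * (w + z).re := by rw [add_re]; linarith

theorem ofReal_mul_mem_sector {c : ℝ} (hc : 0 ≤ c) (hw : w ∈ sector s) :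
    (c : ℂ) * w ∈ sector s := by
  rw [mem_sector, norm_mul, norm_real, Real.norm_of_nonneg hc, re_ofReal_mul]
  rw [mem_sector] at hw
  nlinarith

theorem inv_mem_sector (hw : w ∈ sector s) : w⁻¹ ∈ sector s := by
  rcases eq_or_ne w 0 with rfl | hw0
  · simpa using hw
  have hnorm : 0 < ‖w‖ := norm_pos_iff.mpr hw0
  rw [mem_sector, norm_inv, inv_re, normSq_eq_norm_sq]
  rw [mem_sector] at hw
  calc s.re * ‖w‖⁻¹ = s.re * ‖w‖ / ‖w‖ ^ 2 := by field_simp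
    _ ≤ ‖s‖ * w.re / ‖w‖ ^ 2 := by gcongr
    _ = ‖s‖ * (w.re / ‖w‖ ^ 2) := mul_div_assoc _ _ _

theorem norm_le_of_mem_sector (hs : 0 < s.re) (hw : w ∈ sector s) :
    ‖w‖ ≤ ‖s‖ / s.re * w.re := by
  rw [div_mul_eq_mul_div, le_div_iff₀ hs, mul_comm]
  exact hw

end Complex

theorem admittance_modulus_estimate_general (L R D : ℝ) (hL : 0 ≤ L) (hR : 0 ≤ R) (hD : 0 ≤ D)
    (s : ℂ) (hs : 0 < s.re) :
    ‖s / ((L : ℂ) * s ^ 2 + (R : ℂ) * s + (D : ℂ))‖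
      ≤ (‖s‖ / s.re) * (s / ((L : ℂ) * s ^ 2 + (R : ℂ) * s + (D : ℂ))).re := by
  have hs0 : s ≠ 0 := fun h => by simp [h] at hs
  have hinv : ((L : ℂ) * s ^ 2 + (R : ℂ) * s + (D : ℂ)) / s = L * s + R + D * s⁻¹ := by
    field_simp
  have hmem : ((L : ℂ) * s ^ 2 + (R : ℂ) * s + (D : ℂ)) / s ∈ sector s := by
    rw [hinv]
    exact add_mem_sector hs.le (add_mem_sector hs.le (ofReal_mul_mem_sector hL self_mem_sector)
      (ofReal_mem_sector hR)) (ofReal_mul_mem_sector hD (inv_mem_sector self_mem_sector))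
  rw [← inv_div]
  exact norm_le_of_mem_sector hs (inv_mem_sector hmem)

theorem admittance_modulus_estimate (L R D : ℝ) (hL : 0 ≤ L) (hR : 0 ≤ R) (hD : 0 ≤ D)
    (hsum : 0 < L + R + D) (s : ℂ) (hs : 0 < s.re) :
    ‖s / ((L : ℂ) * s ^ 2 + (R : ℂ) * s + (D : ℂ))‖
      ≤ (‖s‖ / s.re) * (s / ((L : ℂ) * s ^ 2 + (R : ℂ) * s + (D : ℂ))).re :=
  admittance_modulus_estimate_general L R D hL hR hD s hs
end

section
/- Let L, R, D be nonnegative reals with L + R + D > 0, and let s be a complex number with Re s > 0. Then the admittance ρ = s / (L s² + R s + D) satisfies |Im ρ| ≤ (|Im s| / Re s) · Re ρ; equivalently, −|Im s / Re s| ≤ Im ρ / Re ρ ≤ |Im s / Re s|. -/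
open Complex

theorem admittance_im_re_ratio (L R D : ℝ) (hL : 0 ≤ L) (hR : 0 ≤ R) (hD : 0 ≤ D)
    (hsum : 0 < L + R + D) (s : ℂ) (hs : 0 < s.re) :
    |(s / ((L : ℂ) * s ^ 2 + (R : ℂ) * s + (D : ℂ))).im|
      ≤ (|s.im| / s.re) * (s / ((L : ℂ) * s ^ 2 + (R : ℂ) * s + (D : ℂ))).re ∧
    (-(|s.im / s.re|) ≤ (s / ((L : ℂ) * s ^ 2 + (R : ℂ) * s + (D : ℂ))).im
        / (s / ((L : ℂ) * s ^ 2 + (R : ℂ) * s + (D : ℂ))).re ∧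
      (s / ((L : ℂ) * s ^ 2 + (R : ℂ) * s + (D : ℂ))).im
        / (s / ((L : ℂ) * s ^ 2 + (R : ℂ) * s + (D : ℂ))).re ≤ |s.im / s.re|) := by
  set x := s.re with hx
  set y := s.im with hy
  have hn : 0 < x ^ 2 + y ^ 2 := by positivity
  set n : ℝ := x ^ 2 + y ^ 2 with hndef
  set a : ℝ := L * x + R + D * x / n with ha
  set b : ℝ := L * y - D * y / n with hb
  have hs0 : s ≠ 0 := by
    intro h
    rw [hx, h, Complex.zero_re] at hs
    exact lt_irrefl 0 hs
  have ha_pos : 0 < a := by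
    rw [ha]
    rcases lt_trichotomy L 0 with h | h | h
    · linarith
    · rcases lt_trichotomy R 0 with h2 | h2 | h2
      · linarith
      · have hD' : 0 < D := by linarith
        have : 0 < D * x / n := by positivity
        nlinarith
      · have : 0 ≤ D * x / n := by positivity
        nlinarith
    · have h1 : 0 < L * x := by positivity
      have : 0 ≤ D * x / n := by positivity
      nlinarith
  -- key inequality : x * |b| ≤ |y| * a
  have hkey : x * |b| ≤ |y| * a := by
    have h1 : |b| ≤ |y| * (L + D / n) := by
      rw [hb]
      have : L * y - D * y / n = y * (L - D / n) := by ring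
      rw [this, abs_mul]
      have : |L - D / n| ≤ L + D / n := by
        have h2 : 0 ≤ D / n := by positivity
        rcases abs_cases (L - D / n) with ⟨he, _⟩ | ⟨he, _⟩ <;> linarith
      nlinarith [abs_nonneg y]
    have h2 : 0 ≤ D / n := by positivity
    have h3 : x * (|y| * (L + D / n)) ≤ |y| * a := by
      rw [ha]
      have h4 : D * x / n = x * (D / n) := by ring
      nlinarith [abs_nonneg y, mul_nonneg (abs_nonneg y) hR]
    have h5 := mul_le_mul_of_nonneg_left h1 hs.le
    exact le_trans h5 h3
  -- the factor w of the denominator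
  have hw0 : ((⟨a, b⟩ : ℂ)) ≠ 0 := by
    intro h
    rw [Complex.ext_iff] at h
    simp only [Complex.zero_re] at h
    exact ha_pos.ne' h.1
  -- factor the denominator
  have hw : ((L : ℂ) * s ^ 2 + (R : ℂ) * s + (D : ℂ)) = s * ⟨a, b⟩ := by
    apply Complex.ext <;>
      simp [Complex.mul_re, Complex.mul_im, pow_two, ha, hb, ← hx, ← hy] <;>
      field_simp <;> ring
  have hρ : s / ((L : ℂ) * s ^ 2 + (R : ℂ) * s + (D : ℂ)) = (⟨a, b⟩ : ℂ)⁻¹ := by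
    rw [hw]
    field_simp
  have hnsq : Complex.normSq ⟨a, b⟩ = a ^ 2 + b ^ 2 := by
    simp [Complex.normSq_mk]; ring
  have hN : 0 < a ^ 2 + b ^ 2 := by positivity
  have hre : (s / ((L : ℂ) * s ^ 2 + (R : ℂ) * s + (D : ℂ))).re = a / (a ^ 2 + b ^ 2) := by
    rw [hρ, Complex.inv_re, hnsq]
  have him : (s / ((L : ℂ) * s ^ 2 + (R : ℂ) * s + (D : ℂ))).im = -b / (a ^ 2 + b ^ 2) := by
    rw [hρ, Complex.inv_im, hnsq]
  have habs : |(-b) / (a ^ 2 + b ^ 2)| = |b| / (a ^ 2 + b ^ 2) := by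
    rw [abs_div, abs_neg, abs_of_pos hN]
  constructor
  · rw [hre, him, habs]
    have h6 : |b| ≤ |y| * a / x := by
      rw [le_div_iff₀ hs]
      nlinarith [hkey]
    have h7 : |y| / x * (a / (a ^ 2 + b ^ 2)) = (|y| * a / x) / (a ^ 2 + b ^ 2) := by
      ring
    rw [h7]
    gcongr
  · rw [hre, him]
    have hratio : -b / (a ^ 2 + b ^ 2) / (a / (a ^ 2 + b ^ 2)) = -b / a := by
      rw [div_div_div_eq]
      field_simp
    rw [hratio, abs_div, abs_of_pos hs]
    have hmain : |(-b) / a| ≤ |y| / x := by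
      rw [abs_div, abs_neg, abs_of_pos ha_pos, div_le_div_iff₀ ha_pos hs]
      linarith [hkey, mul_comm |b| x]
    exact abs_le.mp hmain
end

section
/- Let L, R, D be nonnegative reals with L + R + D > 0, and let s be a complex number with Re s > 0. Then the admittance ρ = s / (L s² + R s + D) satisfies Re ρ ≥ (Re s / (L + R + D)) · min(|s|², |s|⁻⁴). -/
open Complex ComplexConjugate

/-!
Write `w = L s² + R s + D`, `n = |s|²` and `T = L + R + D`. Then `Re ρ = Re (s w̄) / |w|²` with
`Re (s w̄) = n (L Re s + R) + D Re s ≥ Re s · T · min n 1` (using `Re s ≤ |s|`), while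
`|w| ≤ L n + R |s| + D ≤ T · max n 1`. The quotient of the two bounds is
`(Re s / T) · min n 1 / (max n 1)²`, and `min n 1 / (max n 1)² = min n n⁻²`.
-/

theorem Complex.div_sq_le_re_div {z w : ℂ} {a b : ℝ} (ha : 0 < a) (hz : a ≤ (z * conj w).re)
    (hw : ‖w‖ ≤ b) : a / b ^ 2 ≤ (z / w).re := by
  have hw0 : w ≠ 0 := by
    rintro rfl
    simp at hz
    linarith
  have hre : (z / w).re = (z * conj w).re / ‖w‖ ^ 2 := by
    rw [div_re, mul_re, conj_re, conj_im, Complex.sq_norm]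
    ring
  rw [hre]
  exact div_le_div₀ (ha.le.trans hz) hz (by positivity)
    (pow_le_pow_left₀ (norm_nonneg w) hw 2)

theorem Complex.re_mul_conj_quadratic (L R D : ℝ) (s : ℂ) :
    (s * conj ((L : ℂ) * s ^ 2 + (R : ℂ) * s + (D : ℂ))).re
      = ‖s‖ ^ 2 * (L * s.re + R) + D * s.re := by
  rw [Complex.sq_norm, normSq_apply]
  simp only [map_add, map_mul, conj_ofReal, mul_re, add_re, mul_im, add_im, pow_two,
    conj_re, conj_im, ofReal_re, ofReal_im]
  ring

theorem Complex.norm_quadratic_le {L R D : ℝ} (hL : 0 ≤ L) (hR : 0 ≤ R) (hD : 0 ≤ D) (s : ℂ) :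
    ‖(L : ℂ) * s ^ 2 + (R : ℂ) * s + (D : ℂ)‖ ≤ (L + R + D) * max (‖s‖ ^ 2) 1 := by
  have hs : ‖s‖ ≤ max (‖s‖ ^ 2) 1 := by
    rcases le_total ‖s‖ 1 with h | h
    · exact h.trans (le_max_right _ _)
    · exact (le_self_pow₀ h two_ne_zero).trans (le_max_left _ _)
  calc ‖(L : ℂ) * s ^ 2 + (R : ℂ) * s + (D : ℂ)‖
      ≤ L * ‖s‖ ^ 2 + R * ‖s‖ + D := by
        refine (norm_add₃_le).trans (le_of_eq ?_)
        rw [norm_mul, norm_mul, norm_pow, Complex.norm_of_nonneg hL, Complex.norm_of_nonneg hR,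
          Complex.norm_of_nonneg hD]
    _ ≤ (L + R + D) * max (‖s‖ ^ 2) 1 := by
        linear_combination mul_le_mul_of_nonneg_left (le_max_left _ _) hL
          + mul_le_mul_of_nonneg_left hs hR + mul_le_mul_of_nonneg_left (le_max_right _ 1) hD

theorem mul_min_sq_one_le_sq {x r : ℝ} (hx : 0 ≤ x) (hxr : x ≤ r) : x * min (r ^ 2) 1 ≤ r ^ 2 := by
  rcases le_total r 1 with h | h
  · calc x * min (r ^ 2) 1 ≤ 1 * r ^ 2 := by
          gcongr
          · exact hxr.trans h
          · exact min_le_left _ _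
      _ = r ^ 2 := one_mul _
  · calc x * min (r ^ 2) 1 ≤ r * 1 := by gcongr; exact min_le_right _ _
      _ ≤ r ^ 2 := by nlinarith

theorem Complex.re_mul_min_le_re_mul_conj_quadratic {L R D : ℝ} (hL : 0 ≤ L) (hR : 0 ≤ R)
    (hD : 0 ≤ D) {s : ℂ} (hs : 0 ≤ s.re) :
    s.re * (L + R + D) * min (‖s‖ ^ 2) 1
      ≤ (s * conj ((L : ℂ) * s ^ 2 + (R : ℂ) * s + (D : ℂ))).re := by
  rw [re_mul_conj_quadratic]
  linear_combination mul_le_mul_of_nonneg_left (min_le_left (‖s‖ ^ 2) 1) (mul_nonneg hL hs)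
    + mul_le_mul_of_nonneg_left (mul_min_sq_one_le_sq hs (re_le_norm s)) hR
    + mul_le_mul_of_nonneg_left (min_le_right (‖s‖ ^ 2) 1) (mul_nonneg hD hs)

theorem min_self_inv_sq_eq_div {t : ℝ} (ht : 0 ≤ t) : min t (t ^ 2)⁻¹ = min t 1 / max t 1 ^ 2 := by
  rcases le_total t 1 with h | h
  · rw [min_eq_left h, max_eq_right h, one_pow, div_one, min_eq_left]
    rcases ht.eq_or_lt with rfl | ht0
    · simp
    · exact h.trans (one_le_inv₀ (by positivity) |>.2 (pow_le_one₀ ht h))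
  · rw [min_eq_right h, max_eq_left h, one_div, min_eq_right]
    exact (inv_le_one_of_one_le₀ (one_le_pow₀ h)).trans h

theorem admittance_re_lower_bound (L R D : ℝ) (hL : 0 ≤ L) (hR : 0 ≤ R) (hD : 0 ≤ D)
    (hsum : 0 < L + R + D) (s : ℂ) (hs : 0 < s.re) :
    (s.re / (L + R + D)) * min (‖s‖ ^ 2) ((‖s‖ ^ 4)⁻¹)
      ≤ (s / ((L : ℂ) * s ^ 2 + (R : ℂ) * s + (D : ℂ))).re := by
  set T := L + R + D
  have hs0 : 0 < ‖s‖ := hs.trans_le (re_le_norm s)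
  have hnum := re_mul_min_le_re_mul_conj_quadratic hL hR hD hs.le
  have hpos : 0 < s.re * T * min (‖s‖ ^ 2) 1 := by
    have := lt_min (pow_pos hs0 2) one_pos
    positivity
  calc s.re / T * min (‖s‖ ^ 2) ((‖s‖ ^ 4)⁻¹)
      = s.re * T * min (‖s‖ ^ 2) 1 / (T * max (‖s‖ ^ 2) 1) ^ 2 := by
        rw [show ‖s‖ ^ 4 = (‖s‖ ^ 2) ^ 2 by ring, min_self_inv_sq_eq_div (by positivity)]
        field_simp
    _ ≤ _ := div_sq_le_re_div hpos hnum (norm_quadratic_le hL hR hD s)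
end
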